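/- For any multigraph G, there is a bijection between derivations rooted at a sort S (i.e., nullary multimorphisms into S in the free multicategory on G) and morphisms from S^L to S^R in the free strict monoidal category over the optical contour polygraph of G. -/

import Mathlib

/-- A multi-sorted polygraph. -/
structure Polygraph where
  S : Type
  Gen : List S → List S → Type

/-- String diagrams (morphisms of the free strict monoidal category) over a polygraph. -/
inductive MDiag (P : Polygraph) : List P.S → List P.S → Type
  | id (X : List P.S) : MDiag P X X
  | gen {A B : List P.S} (f : P.Gen A B) : MDiag P A B
  | comp {A B C : List P.S} : MDiag P A B → MDiag P B C → MDiag P A C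
  | tensor {A B A' B' : List P.S} : MDiag P A B → MDiag P A' B' → MDiag P (A ++ A') (B ++ B')

def MDiag.castD {P : Polygraph} {A B A' B' : List P.S} (h1 : A = A') (h2 : B = B')
    (d : MDiag P A B) : MDiag P A' B' := by subst h1; subst h2; exact d

/-- The strict monoidal equations between string diagrams over a polygraph. -/
inductive MEq (P : Polygraph) : ∀ {A B : List P.S}, MDiag P A B → MDiag P A B → Prop
  | refl {A B} (d : MDiag P A B) : MEq P d d
  | symm {A B} {d e : MDiag P A B} : MEq P d e → MEq P e d
  | trans {A B} {d e f : MDiag P A B} : MEq P d e → MEq P e f → MEq P d f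
  | comp_congr {A B C} {a a' : MDiag P A B} {b b' : MDiag P B C} :
      MEq P a a' → MEq P b b' → MEq P (a.comp b) (a'.comp b')
  | tensor_congr {A B A' B'} {a a' : MDiag P A B} {b b' : MDiag P A' B'} :
      MEq P a a' → MEq P b b' → MEq P (a.tensor b) (a'.tensor b')
  | comp_assoc {A B C D} (a : MDiag P A B) (b : MDiag P B C) (c : MDiag P C D) :
      MEq P ((a.comp b).comp c) (a.comp (b.comp c))
  | id_comp {A B} (a : MDiag P A B) : MEq P ((MDiag.id A).comp a) a
  | comp_id {A B} (a : MDiag P A B) : MEq P (a.comp (.id B)) a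
  | tensor_assoc {A B C D E F} (a : MDiag P A B) (b : MDiag P C D) (c : MDiag P E F) :
      MEq P (((a.tensor b).tensor c).castD (List.append_assoc A C E) (List.append_assoc B D F))
        (a.tensor (b.tensor c))
  | tensor_nil_left {A B} (a : MDiag P A B) : MEq P ((MDiag.id []).tensor a) a
  | tensor_nil_right {A B} (a : MDiag P A B) :
      MEq P ((a.tensor (.id [])).castD (List.append_nil A) (List.append_nil B)) a
  | id_tensor_id (X Y : List P.S) : MEq P ((MDiag.id X).tensor (.id Y)) (.id (X ++ Y))
  | interchange {A B C A' B' C'} (a : MDiag P A B) (b : MDiag P B C)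
      (c : MDiag P A' B') (d : MDiag P B' C') :
      MEq P ((a.comp b).tensor (c.comp d)) ((a.tensor c).comp (b.tensor d))

/-- Hom-sets of the free strict monoidal category over a polygraph:
string diagrams modulo the strict monoidal equations. -/
def FHom (P : Polygraph) (A B : List P.S) := Quot (@MEq P A B)

/-- A multigraph: a set of sorts and sets of operations with a list of sources and a
single target. -/
structure Mgraph where
  V : Type
  Op : List V → V → Type

mutual
/-- Derivations: closed trees of the free multicategory on a multigraph, rooted at a
sort. -/
inductive MDeriv (G : Mgraph) : G.V → Type
  | node {l : List G.V} {Y : G.V} (g : G.Op l Y) (ds : MDerivList G l) : MDeriv G Y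
inductive MDerivList (G : Mgraph) : List G.V → Type
  | nil : MDerivList G []
  | cons {v : G.V} {l : List G.V} : MDeriv G v → MDerivList G l → MDerivList G (v :: l)
end

/-- Sorts of the optical contour polygraph: left and right polarized sorts `X^L`,
`X^R` for each sort `X`, and sorts `Mᵢ^g` (`Bool` value `false`) and `Nᵢ^g` (`true`)
for each operation `g` and index `i`. -/
def CSort (G : Mgraph) : Type :=
  (G.V × Bool) ⊕ (((l : List G.V) × (Y : G.V) × G.Op l Y) × ℕ × Bool)

/-- Source list of the `i`-th sector of the contour of an operation. -/
def csrc {G : Mgraph} (o : (l : List G.V) × (Y : G.V) × G.Op l Y)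
    (i : Fin (o.1.length + 1)) : List (CSort G) :=
  if h : (i : ℕ) = 0 then [Sum.inl (o.2.1, false)]
  else [Sum.inr (o, (i : ℕ), false),
        Sum.inl (o.1.get ⟨(i : ℕ) - 1, by omega⟩, true),
        Sum.inr (o, (i : ℕ), true)]

/-- Target list of the `i`-th sector of the contour of an operation. -/
def ctgt {G : Mgraph} (o : (l : List G.V) × (Y : G.V) × G.Op l Y)
    (i : Fin (o.1.length + 1)) : List (CSort G) :=
  if h : (i : ℕ) = o.1.length then [Sum.inl (o.2.1, true)]
  else [Sum.inr (o, (i : ℕ) + 1, false),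
        Sum.inl (o.1.get ⟨(i : ℕ), by omega⟩, false),
        Sum.inr (o, (i : ℕ) + 1, true)]

/-- The optical contour polygraph of a multigraph: each operation `g` of arity `n`
contributes `n + 1` generators, its sectors. -/
def ContourPoly (G : Mgraph) : Polygraph where
  S := CSort G
  Gen A B := Σ' (o : (l : List G.V) × (Y : G.V) × G.Op l Y) (i : Fin (o.1.length + 1)),
    A = csrc o i ∧ B = ctgt o i

/-!
The translation `C` is injective because contours can be run: let a wire `X^R` carry a derivation
of `X` and a wire `Mᵢ^g` the subderivations `p₁, …, pᵢ₋₁` already traversed. Each sector `(g, i)`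
then acts on these tokens, evaluation is invariant under the strict monoidal equations, and the
contour of `d` evaluates to `d`.

It is surjective because every diagram equals a sequence of whiskered generators, and such a
sequence out of `S^L` must be a contour. In a word whose only vertex sort is `X^L`, all others
being `M`- and `N`-sorts, the only generator that can act is a sector `(g, 0)` of an operation `g`
into `X`, acting on `X^L`; its output `M₁ X₁^L N₁` has the same shape, so the first subderivation
is parsed recursively, after which the only generator that can act on `M₁ X₁^R N₁` is `(g, 1)`,
and so on, by induction on the number of layers.
-/

namespace MDiag

variable {P : Polygraph}

/-- `MEq` for diagrams whose boundaries are only propositionally equal. -/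
def HMEq {A B A' B' : List P.S} (d : MDiag P A B) (e : MDiag P A' B') : Prop :=
  ∃ (h₁ : A = A') (h₂ : B = B'), MEq P (d.castD h₁ h₂) e

infix:50 " ≈ₘ " => HMEq

namespace HMEq

theorem of_mEq {A B : List P.S} {d e : MDiag P A B} (h : MEq P d e) : d ≈ₘ e :=
  ⟨rfl, rfl, h⟩

theorem mEq {A B : List P.S} {d e : MDiag P A B} (h : d ≈ₘ e) : MEq P d e := by
  obtain ⟨_, _, h⟩ := h
  exact h

@[refl]
theorem refl {A B : List P.S} (d : MDiag P A B) : d ≈ₘ d := of_mEq (.refl d)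

theorem symm {A B A' B' : List P.S} {d : MDiag P A B} {e : MDiag P A' B'}
    (h : d ≈ₘ e) : e ≈ₘ d := by
  obtain ⟨rfl, rfl, h⟩ := h
  exact of_mEq h.symm

theorem trans {A₁ B₁ A₂ B₂ A₃ B₃ : List P.S} {d : MDiag P A₁ B₁} {e : MDiag P A₂ B₂}
    {f : MDiag P A₃ B₃} (h : d ≈ₘ e) (h' : e ≈ₘ f) : d ≈ₘ f := by
  obtain ⟨rfl, rfl, h⟩ := h
  obtain ⟨rfl, rfl, h'⟩ := h'
  exact of_mEq (h.trans h')

theorem castD_left {A B A' B' : List P.S} (h₁ : A = A') (h₂ : B = B') (d : MDiag P A B) :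
    d.castD h₁ h₂ ≈ₘ d := by
  subst h₁ h₂
  rfl

theorem comp {A B C A' B' C' : List P.S} {a : MDiag P A B} {b : MDiag P B C}
    {a' : MDiag P A' B'} {b' : MDiag P B' C'} (ha : a ≈ₘ a') (hb : b ≈ₘ b') :
    a.comp b ≈ₘ a'.comp b' := by
  obtain ⟨rfl, rfl, ha⟩ := ha
  obtain ⟨_, rfl, hb⟩ := hb
  exact of_mEq (.comp_congr ha hb)

theorem tensor {A B C D A' B' C' D' : List P.S} {a : MDiag P A B} {b : MDiag P C D}
    {a' : MDiag P A' B'} {b' : MDiag P C' D'} (ha : a ≈ₘ a') (hb : b ≈ₘ b') :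
    a.tensor b ≈ₘ a'.tensor b' := by
  obtain ⟨rfl, rfl, ha⟩ := ha
  obtain ⟨rfl, rfl, hb⟩ := hb
  exact of_mEq (.tensor_congr ha hb)

theorem comp_assoc {A B C D : List P.S} (a : MDiag P A B) (b : MDiag P B C)
    (c : MDiag P C D) : (a.comp b).comp c ≈ₘ a.comp (b.comp c) :=
  of_mEq (.comp_assoc a b c)

theorem id_comp {A B : List P.S} (a : MDiag P A B) : (MDiag.id A).comp a ≈ₘ a :=
  of_mEq (.id_comp a)

theorem comp_id {A B : List P.S} (a : MDiag P A B) : a.comp (.id B) ≈ₘ a :=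
  of_mEq (.comp_id a)

theorem tensor_assoc {A B C D E F : List P.S} (a : MDiag P A B) (b : MDiag P C D)
    (c : MDiag P E F) : (a.tensor b).tensor c ≈ₘ a.tensor (b.tensor c) :=
  ⟨List.append_assoc A C E, List.append_assoc B D F, .tensor_assoc a b c⟩

theorem tensor_nil_left {A B : List P.S} (a : MDiag P A B) :
    (MDiag.id []).tensor a ≈ₘ a :=
  of_mEq (.tensor_nil_left a)

theorem tensor_nil_right {A B : List P.S} (a : MDiag P A B) :
    a.tensor (.id []) ≈ₘ a :=
  ⟨List.append_nil A, List.append_nil B, .tensor_nil_right a⟩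

theorem id_tensor_id (X Y : List P.S) :
    (MDiag.id (P := P) X).tensor (.id Y) ≈ₘ .id (X ++ Y) :=
  of_mEq (.id_tensor_id X Y)

theorem interchange {A B C A' B' C' : List P.S} (a : MDiag P A B) (b : MDiag P B C)
    (c : MDiag P A' B') (d : MDiag P B' C') :
    (a.comp b).tensor (c.comp d) ≈ₘ (a.tensor c).comp (b.tensor d) :=
  of_mEq (.interchange a b c d)

instance {A B A' B' A'' B'' : List P.S} :
    @Trans (MDiag P A B) (MDiag P A' B') (MDiag P A'' B'') HMEq HMEq HMEq :=
  ⟨HMEq.trans⟩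

end HMEq

def whisker (L R : List P.S) {A B : List P.S} (d : MDiag P A B) :
    MDiag P (L ++ A ++ R) (L ++ B ++ R) :=
  ((MDiag.id L).tensor (d.tensor (MDiag.id R))).castD
    (List.append_assoc L A R).symm (List.append_assoc L B R).symm

variable {A B C D : List P.S}

theorem whisker_hMEq (L R : List P.S) (d : MDiag P A B) :
    whisker L R d ≈ₘ (MDiag.id L).tensor (d.tensor (MDiag.id R)) :=
  .castD_left _ _ _

theorem whisker_congr (L R : List P.S) {A' B' : List P.S} {d : MDiag P A B}
    {e : MDiag P A' B'} (h : d ≈ₘ e) : whisker L R d ≈ₘ whisker L R e :=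
  (whisker_hMEq L R d).trans <| (HMEq.tensor (.refl _) (h.tensor (.refl _))).trans
    (whisker_hMEq L R e).symm

theorem whisker_comp (L R : List P.S) (a : MDiag P A B) (b : MDiag P B C) :
    whisker L R (a.comp b) ≈ₘ (whisker L R a).comp (whisker L R b) := by
  refine (whisker_hMEq L R _).trans (HMEq.trans ?_
    (HMEq.comp (whisker_hMEq L R a).symm (whisker_hMEq L R b).symm))
  calc (MDiag.id L).tensor ((a.comp b).tensor (MDiag.id R))
      ≈ₘ ((MDiag.id L).comp (.id L)).tensor ((a.comp b).tensor ((MDiag.id R).comp (.id R))) :=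
        .tensor (.symm (.comp_id _)) (.tensor (.refl _) (.symm (.comp_id _)))
    _ ≈ₘ ((MDiag.id L).comp (.id L)).tensor ((a.tensor (.id R)).comp (b.tensor (.id R))) :=
        .tensor (.refl _) (.interchange _ _ _ _)
    _ ≈ₘ _ := .interchange _ _ _ _

theorem whisker_comp_whisker_comp (L R : List P.S) (a : MDiag P A B) (b : MDiag P B C)
    (c : MDiag P (L ++ C ++ R) D) :
    (whisker L R a).comp ((whisker L R b).comp c) ≈ₘ (whisker L R (a.comp b)).comp c :=
  (HMEq.comp_assoc _ _ _).symm.trans (.comp (whisker_comp L R a b).symm (.refl c))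

theorem whisker_nil_left (R : List P.S) (d : MDiag P A B) :
    whisker [] R d ≈ₘ d.tensor (.id R) :=
  (whisker_hMEq [] R d).trans (.tensor_nil_left _)

theorem whisker_nil_right (L : List P.S) (d : MDiag P A B) :
    whisker L [] d ≈ₘ (MDiag.id L).tensor d :=
  (whisker_hMEq L [] d).trans (.tensor (.refl _) (.tensor_nil_right d))

theorem whisker_nil (d : MDiag P A B) : whisker [] [] d ≈ₘ d :=
  (whisker_nil_left [] d).trans (.tensor_nil_right d)

theorem whisker_id (L R A : List P.S) :
    whisker L R (MDiag.id (P := P) A) ≈ₘ MDiag.id (L ++ A ++ R) := by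
  refine (whisker_hMEq L R _).trans ?_
  refine (HMEq.tensor (.refl _) (.id_tensor_id A R)).trans ?_
  exact (HMEq.id_tensor_id L _).trans (by rw [List.append_assoc])

theorem whisker_whisker (L R L' R' : List P.S) (d : MDiag P A B) :
    whisker (L ++ L') (R' ++ R) d ≈ₘ whisker L R (whisker L' R' d) := by
  refine (whisker_hMEq _ _ d).trans (HMEq.trans ?_ (whisker_hMEq L R _).symm)
  calc (MDiag.id (L ++ L')).tensor (d.tensor (MDiag.id (R' ++ R)))
      ≈ₘ ((MDiag.id L).tensor (.id L')).tensor (d.tensor ((MDiag.id R').tensor (.id R))) :=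
        .tensor (.symm (.id_tensor_id _ _)) (.tensor (.refl _) (.symm (.id_tensor_id _ _)))
    _ ≈ₘ (MDiag.id L).tensor ((MDiag.id L').tensor ((d.tensor (.id R')).tensor (.id R))) :=
        (HMEq.tensor_assoc _ _ _).trans
          (.tensor (.refl _) (.tensor (.refl _) (.symm (.tensor_assoc _ _ _))))
    _ ≈ₘ (MDiag.id L).tensor (((MDiag.id L').tensor (d.tensor (.id R'))).tensor (.id R)) :=
        .tensor (.refl _) (.symm (.tensor_assoc _ _ _))
    _ ≈ₘ (MDiag.id L).tensor ((whisker L' R' d).tensor (.id R)) :=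
        .tensor (.refl _) (.tensor (whisker_hMEq L' R' d).symm (.refl _))


inductive Layers (P : Polygraph) : List P.S → List P.S → Type
  | nil (A : List P.S) : Layers P A A
  | cons {A' B' C : List P.S} (L R : List P.S) (f : P.Gen A' B')
      (rest : Layers P (L ++ B' ++ R) C) : Layers P (L ++ A' ++ R) C

namespace Layers

def length {A B : List P.S} : Layers P A B → ℕ
  | .nil _ => 0
  | .cons _ _ _ rest => rest.length + 1

def toDiag {A B : List P.S} : Layers P A B → MDiag P A B
  | .nil A => .id A
  | .cons L R f rest => (whisker L R (.gen f)).comp rest.toDiag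

def cast {A' B' : List P.S} (h₁ : A = A') (h₂ : B = B') (s : Layers P A B) :
    Layers P A' B' :=
  h₁ ▸ h₂ ▸ s

@[simp]
theorem length_cast {A' B' : List P.S} (h₁ : A = A') (h₂ : B = B') (s : Layers P A B) :
    (s.cast h₁ h₂).length = s.length := by
  subst h₁ h₂
  rfl

theorem toDiag_cast {A' B' : List P.S} (h₁ : A = A') (h₂ : B = B') (s : Layers P A B) :
    (s.cast h₁ h₂).toDiag ≈ₘ s.toDiag := by
  subst h₁ h₂
  rfl

def append {A B C : List P.S} : Layers P A B → Layers P B C → Layers P A C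
  | .nil _, t => t
  | .cons L R f rest, t => .cons L R f (rest.append t)

theorem toDiag_append (s : Layers P A B) (t : Layers P B C) :
    (s.append t).toDiag ≈ₘ s.toDiag.comp t.toDiag := by
  induction s with
  | nil A => exact (HMEq.id_comp t.toDiag).symm
  | cons L R f rest ih => exact (HMEq.comp (.refl _) (ih t)).trans (.symm (.comp_assoc _ _ _))

def whisker {A B : List P.S} (L R : List P.S) : Layers P A B → Layers P (L ++ A ++ R) (L ++ B ++ R)
  | .nil _ => .nil _
  | .cons L' R' f rest =>
      (Layers.cons (L ++ L') (R' ++ R) f ((rest.whisker L R).cast (by simp) rfl)).cast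
        (by simp) rfl

theorem toDiag_whisker (L R : List P.S) (s : Layers P A B) :
    (s.whisker L R).toDiag ≈ₘ MDiag.whisker L R s.toDiag := by
  induction s with
  | nil A => exact (whisker_id L R A).symm
  | cons L' R' f rest ih =>
    refine (toDiag_cast _ _ _).trans ((HMEq.comp (whisker_whisker L R L' R' (.gen f))
      ((toDiag_cast _ _ _).trans ih)).trans ?_)
    exact (whisker_comp L R _ _).symm

theorem eq_nil_or_exists_cons (s : Layers P A C) :
    (A = C ∧ s.toDiag ≈ₘ MDiag.id A) ∨
    ∃ (A' B' L R : List P.S) (f : P.Gen A' B') (rest : Layers P (L ++ B' ++ R) C),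
      A = L ++ A' ++ R ∧ rest.length < s.length ∧
      s.toDiag ≈ₘ (MDiag.whisker L R (.gen f)).comp rest.toDiag := by
  cases s with
  | nil A => exact .inl ⟨rfl, .refl _⟩
  | cons L R f rest => exact .inr ⟨_, _, L, R, f, rest, rfl, Nat.lt_succ_self _, .refl _⟩

end Layers

theorem tensor_hMEq_tensor_comp_tensor {A B A' B' : List P.S} (a : MDiag P A B)
    (b : MDiag P A' B') :
    a.tensor b ≈ₘ (a.tensor (.id A')).comp ((MDiag.id B).tensor b) :=
  (HMEq.tensor (.symm (.comp_id a)) (.symm (.id_comp b))).trans (.interchange _ _ _ _)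

theorem exists_layers_mEq {A B : List P.S} (d : MDiag P A B) :
    ∃ s : Layers P A B, MEq P d s.toDiag := by
  suffices ∃ s : Layers P A B, d ≈ₘ s.toDiag from this.imp fun _ => HMEq.mEq
  induction d with
  | id A => exact ⟨.nil A, .refl _⟩
  | @gen A B f =>
    refine ⟨(Layers.cons [] [] f (.nil _)).cast (by simp) (by simp), ?_⟩
    refine .trans ?_ (Layers.toDiag_cast _ _ _).symm
    exact (whisker_nil (.gen f)).symm.trans (HMEq.comp_id _).symm
  | comp a b iha ihb =>
    obtain ⟨s, hs⟩ := iha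
    obtain ⟨t, ht⟩ := ihb
    exact ⟨s.append t, (hs.comp ht).trans (s.toDiag_append t).symm⟩
  | @tensor A B A' B' a b iha ihb =>
    obtain ⟨s, hs⟩ := iha
    obtain ⟨t, ht⟩ := ihb
    refine ⟨(s.whisker [] A').append ((t.whisker B []).cast (by simp) (by simp)), ?_⟩
    refine .trans ?_ (Layers.toDiag_append _ _).symm
    refine (hs.tensor ht).trans ((tensor_hMEq_tensor_comp_tensor _ _).trans (.comp ?_ ?_))
    · exact (whisker_nil_left _ _).symm.trans (Layers.toDiag_whisker _ _ s).symm
    · exact (whisker_nil_right _ _).symm.trans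
        ((Layers.toDiag_whisker _ _ t).symm.trans (Layers.toDiag_cast _ _ _).symm)

end MDiag

theorem List.lt_length_of_drop_eq_cons {α : Type*} {l rem : List α} {i : ℕ} {v : α}
    (h : l.drop i = v :: rem) : i < l.length := by
  by_contra hi
  rw [List.drop_eq_nil_of_le (by omega)] at h
  exact List.cons_ne_nil v rem h.symm

theorem List.getElem_of_drop_eq_cons {α : Type*} {l rem : List α} {i : ℕ} {v : α}
    (h : l.drop i = v :: rem) : l[i]'(lt_length_of_drop_eq_cons h) = v := by
  rw [List.drop_eq_getElem_cons (lt_length_of_drop_eq_cons h)] at h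
  exact (List.cons.inj h).1

theorem List.drop_add_one_of_drop_eq_cons {α : Type*} {l rem : List α} {i : ℕ} {v : α}
    (h : l.drop i = v :: rem) : l.drop (i + 1) = rem := by
  rw [List.drop_eq_getElem_cons (lt_length_of_drop_eq_cons h)] at h
  exact (List.cons.inj h).2

theorem List.eq_of_append_inl_append {α β : Type*} {L R L' R' : List (α ⊕ β)} {a a' : α}
    (hL : ∀ x ∈ L, x.isRight) (hR : ∀ x ∈ R, x.isRight)
    (h : L ++ [.inl a] ++ R = L' ++ [.inl a'] ++ R') : L = L' ∧ a = a' ∧ R = R' := by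
  have notMem {M : List (α ⊕ β)} (hM : ∀ x ∈ M, x.isRight) : Sum.inl a' ∉ M :=
    fun hx => by simpa using hM _ hx
  simp only [List.append_assoc, List.singleton_append] at h
  obtain ⟨rfl, ha, rfl⟩ := (List.append_cons_inj_of_notMem (notMem hL) (notMem hR)).mp h
  exact ⟨rfl, Sum.inl_injective ha, rfl⟩

namespace List.TProd

variable {ι : Type*} {α : ι → Type*}

protected def cast {l l' : List ι} (h : l = l') (t : TProd α l) : TProd α l' := h ▸ t

@[simp]
theorem cast_rfl {l : List ι} (h : l = l) (t : TProd α l) : t.cast h = t := rfl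

@[simp]
theorem cast_cast {l₁ l₂ l₃ : List ι} (h₁ : l₁ = l₂) (h₂ : l₂ = l₃) (t : TProd α l₁) :
    (t.cast h₁).cast h₂ = t.cast (h₁.trans h₂) := by
  subst h₁ h₂
  rfl

theorem eq_cast_symm_of_cast_eq {l l' : List ι} {h : l = l'} {t : TProd α l} {u : TProd α l'}
    (he : t.cast h = u) : t = u.cast h.symm := by
  subst h he
  rfl

theorem cast_cons {i : ι} {l l' : List ι} (h : l = l') (a : α i) (t : TProd α l) :
    TProd.cast (α := α) (congrArg (i :: ·) h) ((a, t) : TProd α (i :: l)) = (a, t.cast h) := by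
  subst h
  rfl

protected def append : {l l' : List ι} → TProd α l → TProd α l' → TProd α (l ++ l')
  | [], _, _, u => u
  | _ :: _, _, t, u => (t.1, TProd.append t.2 u)

def splitLeft : {l l' : List ι} → TProd α (l ++ l') → TProd α l
  | [], _, _ => PUnit.unit
  | _ :: _, _, t => (t.1, splitLeft t.2)

def splitRight : {l l' : List ι} → TProd α (l ++ l') → TProd α l'
  | [], _, t => t
  | _ :: _, _, t => splitRight t.2

variable {l l' l'' : List ι}

@[simp]
theorem splitLeft_append (t : TProd α l) (u : TProd α l') : splitLeft (t.append u) = t := by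
  induction l with
  | nil => rfl
  | cons i l ih => exact Prod.ext rfl (ih t.2)

@[simp]
theorem splitRight_append (t : TProd α l) (u : TProd α l') : splitRight (t.append u) = u := by
  induction l with
  | nil => rfl
  | cons i l ih => exact ih t.2

@[simp]
theorem append_splitLeft_splitRight (t : TProd α (l ++ l')) :
    (splitLeft t).append (splitRight t) = t := by
  induction l with
  | nil => rfl
  | cons i l ih => exact Prod.ext rfl (ih t.2)

theorem cast_append_append (t : TProd α l) (u : TProd α l') (v : TProd α l'') :
    ((t.append u).append v).cast (List.append_assoc l l' l'') = t.append (u.append v) := by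
  induction l with
  | nil => rfl
  | cons i l ih => exact (cast_cons _ t.1 _).trans (congrArg (t.1, ·) (ih t.2))

theorem cast_append_nil (t : TProd α l) (u : TProd α []) :
    (t.append u).cast (List.append_nil l) = t := by
  induction l with
  | nil => rfl
  | cons i l ih => exact (cast_cons _ t.1 _).trans (congrArg (t.1, ·) (ih t.2))

theorem splitLeft_cast_append_assoc (t : TProd α (l ++ (l' ++ l''))) :
    splitLeft (t.cast (List.append_assoc l l' l'').symm) =
      (splitLeft t).append (splitLeft (splitRight t)) := by
  have h := cast_append_append (splitLeft t) (splitLeft (splitRight t)) (splitRight (splitRight t))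
  rw [append_splitLeft_splitRight, append_splitLeft_splitRight] at h
  rw [← eq_cast_symm_of_cast_eq h, splitLeft_append]

theorem splitRight_cast_append_assoc (t : TProd α (l ++ (l' ++ l''))) :
    splitRight (t.cast (List.append_assoc l l' l'').symm) = splitRight (splitRight t) := by
  have h := cast_append_append (splitLeft t) (splitLeft (splitRight t)) (splitRight (splitRight t))
  rw [append_splitLeft_splitRight, append_splitLeft_splitRight] at h
  rw [← eq_cast_symm_of_cast_eq h, splitRight_append]

theorem splitLeft_cast_append_nil (t : TProd α l) :
    splitLeft (l' := []) (t.cast (List.append_nil l).symm) = t := by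
  have h := cast_append_nil (splitLeft (t.cast (List.append_nil l).symm))
    (splitRight (l := l) (t.cast (List.append_nil l).symm))
  rw [append_splitLeft_splitRight, cast_cast] at h
  exact h.symm

end List.TProd

namespace MDerivList

variable {G : Mgraph}

protected def cast {l l' : List G.V} (h : l = l') (ds : MDerivList G l) : MDerivList G l' :=
  h ▸ ds

def snoc : {l : List G.V} → {v : G.V} → MDerivList G l → MDeriv G v → MDerivList G (l ++ [v])
  | _, _, .nil, d => .cons d .nil
  | _, _, .cons d₀ ds, d => .cons d₀ (snoc ds d)

protected def append : {l l' : List G.V} → MDerivList G l → MDerivList G l' →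
    MDerivList G (l ++ l')
  | _, _, .nil, es => es
  | _, _, .cons d ds, es => .cons d (ds.append es)

theorem cast_eq_of_heq {l₁ l : List G.V} (p : l₁ = l) {ds : MDerivList G l₁}
    {es : MDerivList G l} (h : ds ≍ es) : ds.cast p = es := by
  subst p
  exact eq_of_heq h

theorem cast_heq {l l' : List G.V} (h : l = l') (ds : MDerivList G l) : ds.cast h ≍ ds := by
  subst h
  rfl

theorem heq_cons {v : G.V} {l₁ l₂ : List G.V} (h : l₁ = l₂) (d : MDeriv G v)
    {ds : MDerivList G l₁} {es : MDerivList G l₂} (hds : ds ≍ es) : cons d ds ≍ cons d es := by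
  subst h
  rw [eq_of_heq hds]

theorem append_heq_append {l₁ l₂ l' : List G.V} (h : l₁ = l₂) {ds : MDerivList G l₁}
    {es : MDerivList G l₂} (hds : ds ≍ es) (fs : MDerivList G l') :
    ds.append fs ≍ es.append fs := by
  subst h
  rw [eq_of_heq hds]

theorem snoc_append_heq : ∀ {l v l'} (ds : MDerivList G l) (d : MDeriv G v)
    (es : MDerivList G l'), (ds.snoc d).append es ≍ ds.append (.cons d es)
  | _, _, _, .nil, _, _ => .rfl
  | _, _, _, .cons d₀ ds, d, es => heq_cons (by simp) d₀ (snoc_append_heq ds d es)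

theorem append_nil_heq : ∀ {l : List G.V} (ds : MDerivList G l), ds.append .nil ≍ ds
  | _, .nil => .rfl
  | _, .cons d ds => heq_cons (by simp) d (append_nil_heq ds)

end MDerivList

abbrev Mgraph.Operation (G : Mgraph) : Type := (l : List G.V) × (Y : G.V) × G.Op l Y

namespace Contour

open MDiag List

variable {G : Mgraph} {S : G.V}

-- `left X`, `right X`, `m o i`, `n o i` are the paper's `X^L`, `X^R`, `Mᵢ^o`, `Nᵢ^o`;
-- below, `sector o i : src o i ⟶ tgt o i` is its generator `(o, i)` and `contour` is `C`.
abbrev left (X : G.V) : (ContourPoly G).S := .inl (X, false)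

abbrev right (X : G.V) : (ContourPoly G).S := .inl (X, true)

abbrev m (o : G.Operation) (i : ℕ) : (ContourPoly G).S := .inr (o, i, false)

abbrev n (o : G.Operation) (i : ℕ) : (ContourPoly G).S := .inr (o, i, true)

def src (o : G.Operation) (i : ℕ) (hi : i ≤ o.1.length) : List (ContourPoly G).S :=
  csrc o ⟨i, Nat.lt_succ_of_le hi⟩

def tgt (o : G.Operation) (i : ℕ) (hi : i ≤ o.1.length) : List (ContourPoly G).S :=
  ctgt o ⟨i, Nat.lt_succ_of_le hi⟩

theorem src_zero (o : G.Operation) (h : 0 ≤ o.1.length) : src o 0 h = [left o.2.1] := by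
  rw [src, csrc, dif_pos rfl]
  rfl

theorem src_succ (o : G.Operation) (i : ℕ) (h : i + 1 ≤ o.1.length) :
    src o (i + 1) h = [m o (i + 1), right o.1[i], n o (i + 1)] := by
  rw [src, csrc, dif_neg (Nat.succ_ne_zero i)]
  rfl

theorem tgt_last (o : G.Operation) {i : ℕ} (hi : i = o.1.length) (h : i ≤ o.1.length) :
    tgt o i h = [right o.2.1] := by
  rw [tgt, ctgt, dif_pos hi]
  rfl

theorem tgt_of_lt (o : G.Operation) {i : ℕ} (hi : i < o.1.length) (h : i ≤ o.1.length) :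
    tgt o i h = [m o (i + 1), left o.1[i], n o (i + 1)] := by
  rw [tgt, ctgt, dif_neg (Nat.ne_of_lt hi)]
  rfl

def sector (o : G.Operation) (i : ℕ) (hi : i ≤ o.1.length) :
    (ContourPoly G).Gen (src o i hi) (tgt o i hi) :=
  ⟨o, ⟨i, Nat.lt_succ_of_le hi⟩, rfl, rfl⟩

section

variable {o : G.Operation} {i : ℕ} {v : G.V} {rem : List G.V}

theorem tgt_of_drop_eq_cons (hi : i ≤ o.1.length) (h : o.1.drop i = v :: rem) :
    tgt o i hi = [m o (i + 1)] ++ [left v] ++ [n o (i + 1)] := by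
  rw [tgt_of_lt o (List.lt_length_of_drop_eq_cons h), List.getElem_of_drop_eq_cons h]
  rfl

theorem src_succ_of_drop_eq_cons (h : o.1.drop i = v :: rem) :
    src o (i + 1) (List.lt_length_of_drop_eq_cons h) =
      [m o (i + 1)] ++ [right v] ++ [n o (i + 1)] := by
  rw [src_succ, List.getElem_of_drop_eq_cons h]
  rfl

end

mutual

def contour {X : G.V} : MDeriv G X → MDiag (ContourPoly G) [left X] [right X]
  | .node (l := l) (Y := Y) g ds =>
      ((MDiag.gen (sector ⟨l, Y, g⟩ 0 (Nat.zero_le _))).castD (src_zero _ _) rfl).comp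
        (contourRest ⟨l, Y, g⟩ 0 (Nat.zero_le _) ds List.drop_zero)

/-- `C(pᵢ₊₁) ⨾ (o, i + 1) ⨾ ⋯ ⨾ C(pₙ) ⨾ (o, n)`, the part of the contour of `o(p₁, …, pₙ)`
after its `i`-th sector, where `ds` lists the remaining derivations `pᵢ₊₁, …, pₙ`. -/
def contourRest (o : G.Operation) (i : ℕ) (hi : i ≤ o.1.length) {rem : List G.V}
    (ds : MDerivList G rem) (h : o.1.drop i = rem) :
    MDiag (ContourPoly G) (tgt o i hi) [right o.2.1] :=
  match rem, ds, h with
  | _, .nil, h =>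
      (MDiag.id _).castD (tgt_last o (by have := List.drop_eq_nil_iff.mp h; omega) _).symm rfl
  | _, .cons d ds, h =>
      ((whisker [m o (i + 1)] [n o (i + 1)] (contour d)).castD
          (tgt_of_drop_eq_cons hi h).symm (src_succ_of_drop_eq_cons h).symm).comp
        ((MDiag.gen (sector o (i + 1) (List.lt_length_of_drop_eq_cons h))).comp
          (contourRest o (i + 1) (List.lt_length_of_drop_eq_cons h) ds
            (List.drop_add_one_of_drop_eq_cons h)))

end

theorem contourRest_nil (o : G.Operation) (i : ℕ) (hi : i ≤ o.1.length)
    (h : o.1.drop i = []) : contourRest o i hi .nil h ≈ₘ MDiag.id [right o.2.1] := by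
  rw [contourRest]
  exact .castD_left _ _ _

theorem contourRest_cons (o : G.Operation) (i : ℕ) (hi : i ≤ o.1.length) {v : G.V}
    {rem : List G.V} (d : MDeriv G v) (ds : MDerivList G rem) (h : o.1.drop i = v :: rem) :
    contourRest o i hi (.cons d ds) h =
      ((whisker [m o (i + 1)] [n o (i + 1)] (contour d)).castD
          (tgt_of_drop_eq_cons hi h).symm (src_succ_of_drop_eq_cons h).symm).comp
        ((MDiag.gen (sector o (i + 1) (List.lt_length_of_drop_eq_cons h))).comp
          (contourRest o (i + 1) (List.lt_length_of_drop_eq_cons h) ds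
            (List.drop_add_one_of_drop_eq_cons h))) := by
  rw [contourRest]

theorem contour_node {l : List G.V} {Y : G.V} (g : G.Op l Y) (ds : MDerivList G l) :
    contour (.node g ds) ≈ₘ
      (MDiag.gen (sector ⟨l, Y, g⟩ 0 (Nat.zero_le _))).comp
        (contourRest ⟨l, Y, g⟩ 0 (Nat.zero_le _) ds List.drop_zero) := by
  rw [contour]
  exact .comp (.castD_left _ _ _) (.refl _)

theorem tgt_eq_append (L R : List (ContourPoly G).S) {o : G.Operation} {i : ℕ}
    (hi : i < o.1.length) :
    L ++ tgt o i hi.le ++ R = (L ++ [m o (i + 1)]) ++ [left o.1[i]] ++ (n o (i + 1) :: R) := by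
  rw [tgt_of_lt o hi]
  simp

theorem src_succ_eq_append (L R : List (ContourPoly G).S) {o : G.Operation} {i : ℕ}
    (hi : i < o.1.length) :
    (L ++ [m o (i + 1)]) ++ [right o.1[i]] ++ (n o (i + 1) :: R) = L ++ src o (i + 1) hi ++ R := by
  rw [src_succ]
  simp

theorem whisker_contourRest_cons {T : List (ContourPoly G).S} (L R : List (ContourPoly G).S)
    {o : G.Operation} {i : ℕ} (hi : i < o.1.length) {rem : List G.V}
    (hrem : o.1.drop (i + 1) = rem) (hdrop : o.1.drop i = o.1[i] :: rem)
    (d : MDeriv G o.1[i]) (ds : MDerivList G rem)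
    (c : MDiag (ContourPoly G) (L ++ [right o.2.1] ++ R) T) :
    ((whisker (L ++ [m o (i + 1)]) (n o (i + 1) :: R) (contour d)).castD rfl
        (src_succ_eq_append L R hi)).comp
      ((whisker L R (.gen (sector o (i + 1) hi))).comp
        ((whisker L R (contourRest o (i + 1) hi ds hrem)).comp c)) ≈ₘ
    (whisker L R (contourRest o i hi.le (.cons d ds) hdrop)).comp c := by
  have hd : (whisker (L ++ [m o (i + 1)]) (n o (i + 1) :: R) (contour d)).castD rfl
        (src_succ_eq_append L R hi) ≈ₘ
      whisker L R ((whisker [m o (i + 1)] [n o (i + 1)] (contour d)).castD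
        (tgt_of_drop_eq_cons hi.le hdrop).symm (src_succ_of_drop_eq_cons hdrop).symm) :=
    (HMEq.castD_left _ _ _).trans
      ((whisker_whisker (P := ContourPoly G) L R [m o (i + 1)] [n o (i + 1)] _).trans
        (whisker_congr (P := ContourPoly G) L R (HMEq.castD_left _ _ _).symm))
  refine (HMEq.comp hd (whisker_comp_whisker_comp _ _ _ _ _)).trans ?_
  rw [contourRest_cons]
  exact whisker_comp_whisker_comp _ _ _ _ _

/-! ### Parsing layered diagrams -/

abbrev Layers (A B : List (ContourPoly G).S) := MDiag.Layers (ContourPoly G) A B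

theorem Layers.exists_sector_zero {L R : List (ContourPoly G).S}
    (hL : ∀ x ∈ L, Sum.isRight x) (hR : ∀ x ∈ R, Sum.isRight x) {X : G.V}
    (s : Layers (L ++ [left X] ++ R) [right S]) :
    ∃ (o : G.Operation) (_ : o.2.1 = X)
      (rest : Layers (L ++ tgt o 0 (Nat.zero_le _) ++ R) [right S]),
      rest.length < s.length ∧
      s.toDiag ≈ₘ (whisker L R (.gen (sector o 0 (Nat.zero_le _)))).comp rest.toDiag := by
  rcases s.eq_nil_or_exists_cons with
    ⟨hs, -⟩ | ⟨_, _, L', R', ⟨o, ⟨j, hj⟩, rfl, rfl⟩, rest, h, hlen, hs⟩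
  · have := (List.eq_of_append_inl_append hL hR
      (hs.trans (show [right S] = [] ++ [Sum.inl (S, true)] ++ [] from rfl))).2.1
    exact absurd (Prod.mk.inj this).2 (by decide)
  cases j with
  | zero =>
    change _ = L' ++ src o 0 (Nat.zero_le _) ++ R' at h
    rw [src_zero] at h
    obtain ⟨rfl, hX, rfl⟩ := List.eq_of_append_inl_append hL hR h
    exact ⟨o, (Prod.mk.inj hX).1.symm, rest, hlen, hs⟩
  | succ j =>
    change _ = L' ++ src o (j + 1) (by omega) ++ R' at h
    rw [src_succ] at h
    have h' : L ++ [left X] ++ R =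
        (L' ++ [m o (j + 1)]) ++ [right o.1[j]] ++ (n o (j + 1) :: R') := by
      simpa using h
    have := (List.eq_of_append_inl_append hL hR h').2.1
    exact absurd (Prod.mk.inj this).2 (by decide)

theorem Layers.exists_sector_succ {L R : List (ContourPoly G).S} (o : G.Operation) {i : ℕ}
    (hL : ∀ x ∈ L ++ [m o (i + 1)], Sum.isRight x)
    (hR : ∀ x ∈ n o (i + 1) :: R, Sum.isRight x)
    (hi : i < o.1.length) {v : G.V}
    (s : Layers ((L ++ [m o (i + 1)]) ++ [right v] ++ (n o (i + 1) :: R)) [right S]) :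
    ∃ rest : Layers (L ++ tgt o (i + 1) hi ++ R) [right S],
      rest.length < s.length ∧
      s.toDiag ≈ₘ (whisker L R (.gen (sector o (i + 1) hi))).comp rest.toDiag := by
  rcases s.eq_nil_or_exists_cons with
    ⟨hs, -⟩ | ⟨_, _, L', R', ⟨o', ⟨j, hj⟩, rfl, rfl⟩, rest, h, hlen, hs⟩
  · exact absurd (List.eq_of_append_inl_append hL hR
      (hs.trans (show [right S] = [] ++ [Sum.inl (S, true)] ++ [] from rfl))).1
      (List.append_ne_nil_of_right_ne_nil L (List.cons_ne_nil _ _))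
  cases j with
  | zero =>
    change _ = L' ++ src o' 0 (Nat.zero_le _) ++ R' at h
    rw [src_zero] at h
    have := (List.eq_of_append_inl_append hL hR h).2.1
    exact absurd (Prod.mk.inj this).2 (by decide)
  | succ j =>
    change _ = L' ++ src o' (j + 1) (by omega) ++ R' at h
    rw [src_succ] at h
    have h' : (L ++ [m o (i + 1)]) ++ [right v] ++ (n o (i + 1) :: R) =
        (L' ++ [m o' (j + 1)]) ++ [right o'.1[j]] ++ (n o' (j + 1) :: R') := by
      simpa using h
    obtain ⟨hLL, -, hRR⟩ := List.eq_of_append_inl_append hL hR h'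
    obtain ⟨rfl, hM⟩ := List.append_inj' hLL (by simp)
    obtain ⟨rfl, hij⟩ := Prod.mk.inj (Sum.inr_injective (List.singleton_inj.mp hM))
    obtain rfl : i = j := Nat.succ_injective (Prod.mk.inj hij).1
    obtain rfl : R = R' := (List.cons.inj hRR).2
    exact ⟨rest, hlen, hs⟩

-- Invariants of the parsing induction on the number of layers: the context words `L`, `R`
-- consist of `M`- and `N`-sorts, which record the sectors still to be fired.
def ParsesAsContour (S : G.V) (k : ℕ) : Prop :=
  ∀ ⦃L R : List (ContourPoly G).S⦄, (∀ x ∈ L, Sum.isRight x) → (∀ x ∈ R, Sum.isRight x) →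
    ∀ ⦃X : G.V⦄ (s : Layers (L ++ [left X] ++ R) [right S]), s.length ≤ k →
    ∃ (d : MDeriv G X) (s' : Layers (L ++ [right X] ++ R) [right S]),
      s'.length < s.length ∧ s.toDiag ≈ₘ (whisker L R (contour d)).comp s'.toDiag

def ParsesAsContourRest (S : G.V) (k : ℕ) : Prop :=
  ∀ ⦃L R : List (ContourPoly G).S⦄, (∀ x ∈ L, Sum.isRight x) → (∀ x ∈ R, Sum.isRight x) →
    ∀ (o : G.Operation) (i : ℕ) (hi : i ≤ o.1.length)
    (s : Layers (L ++ tgt o i hi ++ R) [right S]), s.length ≤ k →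
    ∃ (rem : List G.V) (h : o.1.drop i = rem) (ds : MDerivList G rem)
      (s' : Layers (L ++ [right o.2.1] ++ R) [right S]),
      s'.length ≤ s.length ∧ s.toDiag ≈ₘ (whisker L R (contourRest o i hi ds h)).comp s'.toDiag

theorem parsesAsContour_of_forall_lt {k : ℕ} (hrest : ∀ j < k, ParsesAsContourRest S j) :
    ParsesAsContour S k := by
  intro L R hL hR X s hk
  obtain ⟨⟨l, Y, g⟩, rfl, rest, hlen, hs⟩ := Layers.exists_sector_zero hL hR s
  obtain ⟨rem, hrem, ds, s', hlen', hs'⟩ :=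
    hrest rest.length (by omega) hL hR _ 0 (Nat.zero_le _) rest le_rfl
  obtain rfl : l = rem := List.drop_zero.symm.trans hrem
  refine ⟨.node g ds, s', by omega, hs.trans ((HMEq.comp (.refl _) hs').trans ?_)⟩
  exact (whisker_comp_whisker_comp L R (.gen (sector ⟨l, Y, g⟩ 0 (Nat.zero_le _))) _ _).trans
    (.comp (whisker_congr L R (contour_node g ds).symm) (.refl s'.toDiag))

theorem exists_contourRest_nil {L R : List (ContourPoly G).S} (o : G.Operation) {i : ℕ}
    (hi : i ≤ o.1.length) (hn : i = o.1.length) (s : Layers (L ++ tgt o i hi ++ R) [right S]) :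
    ∃ (h : o.1.drop i = []) (s' : Layers (L ++ [right o.2.1] ++ R) [right S]),
      s'.length = s.length ∧
      s.toDiag ≈ₘ (whisker L R (contourRest o i hi .nil h)).comp s'.toDiag := by
  have hnil : o.1.drop i = [] := List.drop_eq_nil_iff.mpr hn.ge
  refine ⟨hnil, s.cast (by rw [tgt_last o hn]) rfl, Layers.length_cast _ _ _, ?_⟩
  have hid := (whisker_congr L R (contourRest_nil o i hi hnil)).trans
    (whisker_id (P := ContourPoly G) L R _)
  exact (Layers.toDiag_cast _ _ s).symm.trans
    ((HMEq.id_comp _).symm.trans (HMEq.comp hid.symm (.refl _)))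

theorem parsesAsContourRest_of_forall_lt {k : ℕ} (hderiv : ParsesAsContour S k)
    (hrest : ∀ j < k, ParsesAsContourRest S j) : ParsesAsContourRest S k := by
  intro L R hL hR o i hi s hk
  by_cases hn : i = o.1.length
  · obtain ⟨h, s', hlen, hs⟩ := exists_contourRest_nil o hi hn s
    exact ⟨[], h, .nil, s', hlen.le, hs⟩
  have hlt : i < o.1.length := by omega
  have hL' : ∀ x ∈ L ++ [m o (i + 1)], Sum.isRight x := by
    simp only [List.mem_append, List.mem_singleton]
    rintro x (hx | rfl)
    exacts [hL x hx, rfl]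
  have hR' : ∀ x ∈ n o (i + 1) :: R, Sum.isRight x := by
    simp only [List.mem_cons]
    rintro x (rfl | hx)
    exacts [rfl, hR x hx]
  have hlen := Layers.length_cast (tgt_eq_append L R hlt) rfl s
  obtain ⟨d, s₁, hlen₁, hs₁⟩ :=
    hderiv hL' hR' (s.cast (tgt_eq_append L R hlt) rfl) (hlen.trans_le hk)
  obtain ⟨rest, hlen₂, hs₂⟩ := Layers.exists_sector_succ o hL' hR' hlt s₁
  obtain ⟨rem, hrem, ds, s', hlen', hs'⟩ :=
    hrest rest.length (by omega) hL hR o (i + 1) hlt rest le_rfl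
  have hdrop : o.1.drop i = o.1[i] :: rem := hrem ▸ List.drop_eq_getElem_cons hlt
  refine ⟨_, hdrop, .cons d ds, s', by omega, ?_⟩
  refine (Layers.toDiag_cast _ _ s).symm.trans (hs₁.trans ?_)
  refine .trans ?_ (whisker_contourRest_cons L R hlt hrem hdrop d ds s'.toDiag)
  exact .comp (HMEq.castD_left _ _ _).symm (hs₂.trans (.comp (.refl _) hs'))

theorem parsesAsContour_and_parsesAsContourRest (k : ℕ) :
    ParsesAsContour S k ∧ ParsesAsContourRest S k := by
  induction k using Nat.strong_induction_on with
  | _ k ih =>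
    have hrest : ∀ j < k, ParsesAsContourRest S j := fun j hj => (ih j hj).2
    have hderiv := parsesAsContour_of_forall_lt hrest
    exact ⟨hderiv, parsesAsContourRest_of_forall_lt hderiv hrest⟩

theorem Layers.toDiag_hMEq_id {T : List (ContourPoly G).S} (s : Layers [right S] T) :
    s.toDiag ≈ₘ MDiag.id [right S] := by
  rcases s.eq_nil_or_exists_cons with
    ⟨-, hs⟩ | ⟨_, _, L', R', ⟨o, ⟨j, hj⟩, rfl, rfl⟩, rest, h, -, -⟩
  · exact hs
  cases j with
  | zero =>
    change _ = L' ++ src o 0 (Nat.zero_le _) ++ R' at h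
    rw [src_zero] at h
    have : left o.2.1 ∈ [right S] := by rw [h]; simp
    exact absurd (Prod.mk.inj (Sum.inl_injective (List.mem_singleton.mp this))).2 (by decide)
  | succ j =>
    change _ = L' ++ src o (j + 1) (by omega) ++ R' at h
    rw [src_succ] at h
    have := congrArg List.length h
    simp only [List.length_append, List.length_cons, List.length_nil] at this
    omega

theorem exists_mEq_contour (e : MDiag (ContourPoly G) [left S] [right S]) :
    ∃ d : MDeriv G S, MEq (ContourPoly G) e (contour d) := by
  obtain ⟨s, hs⟩ := exists_layers_mEq e
  obtain ⟨d, s', -, hs'⟩ :=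
    (parsesAsContour_and_parsesAsContourRest s.length).1 (L := []) (R := []) (by simp) (by simp)
      s le_rfl
  exact ⟨d, HMEq.mEq <| (HMEq.of_mEq hs).trans <| hs'.trans <|
    (HMEq.comp (whisker_nil _) (Layers.toDiag_hMEq_id s')).trans (.comp_id _)⟩

/-! ### Running contours -/

/-- The tokens running along the wires of a contour: `X^R` carries a derivation of `X`, `Mᵢ^o`
carries the derivations `p₁, …, pᵢ₋₁` already traversed, and the other wires carry nothing. -/
abbrev Token : (ContourPoly G).S → Type
  | .inl (X, true) => MDeriv G X
  | .inl (_, false) => PUnit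
  | .inr (o, i, false) => MDerivList G (o.1.take (i - 1))
  | .inr (_, _, true) => PUnit

/-- The derivations `p₁, …, pⱼ` read off the input wires of the sector `(o, j)`. -/
def traversed (o : G.Operation) : (j : ℕ) → (hj : j ≤ o.1.length) →
    TProd Token (src o j hj) → MDerivList G (o.1.take j)
  | 0, _, _ => MDerivList.nil.cast List.take_zero.symm
  | j + 1, hj, t =>
    let t' := t.cast (src_succ o j hj)
    (t'.1.snoc t'.2.1).cast (List.take_concat_get' o.1 j hj)

def evalSector (o : G.Operation) (j : ℕ) (hj : j ≤ o.1.length)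
    (t : TProd Token (src o j hj)) : TProd Token (tgt o j hj) :=
  if hn : j = o.1.length then
    TProd.cast (tgt_last o hn hj).symm
      (.node o.2.2 ((traversed o j hj t).cast (by rw [hn, List.take_length])), PUnit.unit)
  else
    TProd.cast (tgt_of_lt o (by omega) hj).symm
      (traversed o j hj t, PUnit.unit, PUnit.unit, PUnit.unit)

def evalGen {A B : List (ContourPoly G).S} (f : (ContourPoly G).Gen A B) (t : TProd Token A) :
    TProd Token B :=
  (evalSector f.1 f.2.1 (Nat.le_of_lt_succ f.2.1.isLt) (t.cast f.2.2.1)).cast f.2.2.2.symm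

def eval : {A B : List (ContourPoly G).S} → MDiag (ContourPoly G) A B →
    TProd Token A → TProd Token B
  | _, _, .id _ => fun t => t
  | _, _, .gen f => evalGen f
  | _, _, .comp a b => fun t => eval b (eval a t)
  | _, _, .tensor a b => fun t => (eval a (TProd.splitLeft t)).append (eval b (TProd.splitRight t))

theorem eval_id {A : List (ContourPoly G).S} (t : TProd Token A) : eval (.id A) t = t :=
  rfl

theorem eval_comp {A B C : List (ContourPoly G).S} (a : MDiag (ContourPoly G) A B)
    (b : MDiag (ContourPoly G) B C) (t : TProd Token A) : eval (a.comp b) t = eval b (eval a t) :=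
  rfl

theorem eval_tensor {A B A' B' : List (ContourPoly G).S} (a : MDiag (ContourPoly G) A B)
    (b : MDiag (ContourPoly G) A' B') (t : TProd Token (A ++ A')) :
    eval (a.tensor b) t = (eval a (TProd.splitLeft t)).append (eval b (TProd.splitRight t)) :=
  rfl

theorem eval_sector (o : G.Operation) (j : ℕ) (hj : j ≤ o.1.length)
    (t : TProd Token (src o j hj)) : eval (.gen (sector o j hj)) t = evalSector o j hj t :=
  rfl

theorem eval_whisker_singleton (a b : (ContourPoly G).S) {A B : List (ContourPoly G).S}
    (e : MDiag (ContourPoly G) A B) (x : Token a) (y : TProd Token (A ++ [b])) :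
    eval (whisker [a] [b] e) ((x, y) : TProd Token ([a] ++ A ++ [b])) =
      ((x, (eval e (TProd.splitLeft y)).append (TProd.splitRight y)) :
        TProd Token ([a] ++ B ++ [b])) :=
  rfl

theorem eval_castD {A B A' B' : List (ContourPoly G).S} (h₁ : A = A') (h₂ : B = B')
    (d : MDiag (ContourPoly G) A B) (t : TProd Token A') :
    eval (d.castD h₁ h₂) t = (eval d (t.cast h₁.symm)).cast h₂ := by
  subst h₁ h₂
  rfl

theorem eval_eq_of_mEq {A B : List (ContourPoly G).S} {d e : MDiag (ContourPoly G) A B}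
    (h : MEq (ContourPoly G) d e) : eval d = eval e := by
  induction h with
  | refl d => rfl
  | symm _ ih => exact ih.symm
  | trans _ _ ih₁ ih₂ => exact ih₁.trans ih₂
  | comp_congr _ _ ih₁ ih₂ => funext t; simp only [eval_comp, ih₁, ih₂]
  | tensor_congr _ _ ih₁ ih₂ =>
    funext t
    exact congrArg₂ TProd.append (congrFun ih₁ _) (congrFun ih₂ _)
  | comp_assoc a b c => rfl
  | id_comp a => rfl
  | comp_id a => rfl
  | tensor_assoc a b c =>
    funext t
    rw [eval_castD, eval_tensor, eval_tensor, eval_tensor, eval_tensor, TProd.cast_append_append,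
      TProd.splitLeft_cast_append_assoc, TProd.splitRight_cast_append_assoc,
      TProd.splitLeft_append, TProd.splitRight_append]
  | tensor_nil_left a => rfl
  | tensor_nil_right a =>
    funext t
    rw [eval_castD, eval_tensor, TProd.cast_append_nil, TProd.splitLeft_cast_append_nil]
  | id_tensor_id X Y => funext t; exact TProd.append_splitLeft_splitRight t
  | interchange a b c d =>
    funext t
    simp only [eval_tensor, eval_comp, TProd.splitLeft_append, TProd.splitRight_append]

mutual

theorem eval_contour {X : G.V} (d : MDeriv G X) (t : TProd Token [left X]) :
    eval (contour d) t = (d, PUnit.unit) :=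
  match d with
  | .node g ds => by
    rw [contour, eval_comp, eval_castD, TProd.cast_rfl, ← eval_comp, eval_sector_comp_contourRest,
      traversed]
    refine congrArg (fun ds => (MDeriv.node g ds, PUnit.unit)) (MDerivList.cast_eq_of_heq _ ?_)
    exact MDerivList.append_heq_append List.take_zero (MDerivList.cast_heq _ _) ds
termination_by sizeOf d

theorem eval_sector_comp_contourRest (o : G.Operation) (i : ℕ) (hi : i ≤ o.1.length)
    {rem : List G.V} (ds : MDerivList G rem) (h : o.1.drop i = rem)
    (t : TProd Token (src o i hi)) :
    eval ((MDiag.gen (sector o i hi)).comp (contourRest o i hi ds h)) t =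
      (.node o.2.2 (((traversed o i _ t).append ds).cast
        (by rw [← h, List.take_append_drop])), PUnit.unit) :=
  match rem, ds, h with
  | _, .nil, h => by
    have hn : i = o.1.length := by have := List.drop_eq_nil_iff.mp h; omega
    rw [eval_comp, contourRest, eval_castD, eval_sector, evalSector, dif_pos hn]
    erw [eval_id, TProd.cast_cast, TProd.cast_cast, TProd.cast_rfl]
    refine congrArg (fun ds => (MDeriv.node o.2.2 ds, PUnit.unit)) (MDerivList.cast_eq_of_heq _ ?_)
    exact (MDerivList.append_nil_heq _).symm.trans (MDerivList.cast_heq _ _).symm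
  | _, .cons (v := v) d ds, h => by
    have hlt := List.lt_length_of_drop_eq_cons h
    have hv : o.1[i]'hlt = v := List.getElem_of_drop_eq_cons h
    -- Substituting `o.1[i]` for `v` makes the casts between boundary words below reflexive;
    -- the recursive call on `d` is made first, while its termination is still visible.
    have ih := eval_contour d
    subst hv
    rw [contourRest_cons, eval_comp, eval_comp, eval_sector_comp_contourRest, eval_sector,
      evalSector, dif_neg (by omega), eval_castD, traversed]
    have hW : eval (whisker [m o (i + 1)] [n o (i + 1)] (contour d))
        ((traversed o i hi t, PUnit.unit, PUnit.unit, PUnit.unit) :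
          TProd Token ([m o (i + 1)] ++ [left o.1[i]] ++ [n o (i + 1)])) =
        ((traversed o i hi t, d, PUnit.unit, PUnit.unit) :
          TProd Token ([m o (i + 1)] ++ [right o.1[i]] ++ [n o (i + 1)])) := by
      erw [eval_whisker_singleton, ih]
      rfl
    erw [TProd.cast_cast, TProd.cast_rfl, TProd.cast_cast, TProd.cast_rfl, hW]
    refine congrArg (fun ds => (MDeriv.node o.2.2 ds, PUnit.unit)) (MDerivList.cast_eq_of_heq _ ?_)
    refine (MDerivList.append_heq_append (List.take_concat_get' o.1 i hlt).symm
      (MDerivList.cast_heq _ _) ds).trans ?_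
    exact (MDerivList.snoc_append_heq _ _ _).trans (MDerivList.cast_heq _ _).symm
termination_by sizeOf ds

end

def toFHom (d : MDeriv G S) : FHom (ContourPoly G) [left S] [right S] :=
  Quot.mk _ (contour d)

def ofFHom : FHom (ContourPoly G) [left S] [right S] → MDeriv G S :=
  Quot.lift (fun e => (eval e ((PUnit.unit, PUnit.unit) : TProd Token [left S])).1)
    fun _ _ h => by rw [eval_eq_of_mEq h]

theorem leftInverse_ofFHom_toFHom : Function.LeftInverse (ofFHom (S := S)) toFHom :=
  fun d => congrArg Prod.fst (eval_contour d _)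

theorem toFHom_surjective : Function.Surjective (toFHom (S := S)) :=
  Quot.ind fun e => (exists_mEq_contour e).imp fun _ hd => Quot.sound (.symm hd)

end Contour

/-- For any multigraph `G`, derivations rooted at a sort `S` are in bijection with
the morphisms `S^L → S^R` of the free strict monoidal category over the optical
contour polygraph of `G`. -/
theorem derivations_equiv_contours (G : Mgraph) (S : G.V) :
    Nonempty
      (MDeriv G S ≃ FHom (ContourPoly G) [Sum.inl (S, false)] [Sum.inl (S, true)]) :=
  ⟨.ofBijective Contour.toFHom
    ⟨Contour.leftInverse_ofFHom_toFHom.injective, Contour.toFHom_surjective⟩⟩
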